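/- arXiv:2411.18992 — 2 statements merged into one kernel-verified Lean document; each statement's English description precedes it below -/
import Mathlib

section
/- Let m ≥ 3 and let n be a positive multiple of 11, and let 0 ≤ ℓ < n. Suppose there exists an integer k such that ℓ = (11k + 3m) mod n. Then the map g₂ defined on the vertices of the strong graph bundle C_m ⊠^{σ_ℓ} C_n by g₂(i,j) = (6i + 2j) mod 11 is an L(2,1)-labeling whose labels all lie in {0,1,…,10}. -/
/-- One-directional step relation for the strong graph bundle `C_m ⊠^{σ_ℓ} C_n`:
(i) fiber edges, (ii) base steps `i → i+1` for `0 ≤ i ≤ m-2`,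
(iii) seam edges from fiber over `m-1` to fiber over `0`, twisted by the cyclic `ℓ`-shift. -/
def bundleStep (m n ℓ : ℕ) (u v : Fin m × ZMod n) : Prop :=
  (u.1 = v.1 ∧ (v.2 = u.2 + 1 ∨ v.2 = u.2 - 1)) ∨
  ((u.1 : ℕ) + 1 = (v.1 : ℕ) ∧ (v.2 = u.2 - 1 ∨ v.2 = u.2 ∨ v.2 = u.2 + 1)) ∨
  ((u.1 : ℕ) = m - 1 ∧ (v.1 : ℕ) = 0 ∧
    (v.2 = u.2 + (ℓ : ZMod n) - 1 ∨ v.2 = u.2 + (ℓ : ZMod n) ∨ v.2 = u.2 + (ℓ : ZMod n) + 1))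

/-- The strong graph bundle `C_m ⊠^{σ_ℓ} C_n` with base cycle `C_m`, fiber cycle `C_n`
and cyclic `ℓ`-shift. -/
def strongBundle (m n ℓ : ℕ) : SimpleGraph (Fin m × ZMod n) where
  Adj u v := u ≠ v ∧ (bundleStep m n ℓ u v ∨ bundleStep m n ℓ v u)
  symm := ⟨fun u v ⟨h1, h2⟩ => ⟨h1.symm, h2.symm⟩⟩
  loopless := ⟨fun u h => h.1 rfl⟩

/-- `f` is an `L(2,1)`-labeling of `G`: labels of adjacent vertices differ by at least 2,
labels of vertices at distance 2 differ by at least 1. -/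
def IsL21Labeling {V : Type*} (G : SimpleGraph V) (f : V → ℕ) : Prop :=
  (∀ u v, G.Adj u v → 2 ≤ |(f u : ℤ) - (f v : ℤ)|) ∧
  (∀ u v, G.dist u v = 2 → 1 ≤ |(f u : ℤ) - (f v : ℤ)|)

/-- The span of a labeling: largest label minus smallest label. -/
noncomputable def spanOf {V : Type*} (f : V → ℕ) : ℕ :=
  sSup (Set.range f) - sInf (Set.range f)

/-- The `λ`-number of `G`: the minimum span over all `L(2,1)`-labelings of `G`. -/
noncomputable def lambdaNumber {V : Type*} (G : SimpleGraph V) : ℕ :=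
  sInf { s : ℕ | ∃ f : V → ℕ, IsL21Labeling G f ∧ spanOf f = s }

/-!
Unwinding the base cycle exhibits `C_m ⊠^{σ_ℓ} C_n` as a quotient of the king's graph on
`ℤ × ℤ`, and `g₂` is induced by the form `6x + 2y` modulo 11, which is well defined on the
quotient exactly because `11 ∣ n` and `ℓ ≡ 3m (mod 11)`. The eight king moves change this form
by `±2, ±4, ±6, ±8`: these avoid `0, ±1` modulo 11, which gives the condition at distance one,
and they are pairwise distinct modulo 11, so the neighbours of a vertex carry distinct labels,
which gives the condition at distance two.
-/

theorem SimpleGraph.exists_adj_adj_of_dist_eq_two {V : Type*} {G : SimpleGraph V} {u v : V}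
    (h : G.dist u v = 2) : u ≠ v ∧ ∃ w, G.Adj u w ∧ G.Adj v w := by
  have hreach := SimpleGraph.Reachable.of_dist_ne_zero (h.symm ▸ two_ne_zero)
  have hedist : G.edist u v = 2 := by rw [← hreach.coe_dist_eq_edist, h]; rfl
  obtain ⟨hne, -, w, hw⟩ := SimpleGraph.edist_eq_two_iff.mp hedist
  exact ⟨hne, w, G.mem_commonNeighbors.mp hw⟩

theorem IsL21Labeling.of_cast {V R : Type*} [AddGroupWithOne R] (G : SimpleGraph V)
    (f : V → ℕ) (hadj : ∀ u v, G.Adj u v → (f v : R) - f u ∉ ({-1, 0, 1} : Set R))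
    (hnbr : ∀ w u v, G.Adj w u → G.Adj w v → (f u : R) = f v → u = v) :
    IsL21Labeling G f := by
  refine ⟨fun u v huv => ?_, fun u v huv => ?_⟩
  · by_contra! hlt
    apply hadj u v huv
    have hcast : (f v : R) - f u = (((f v : ℤ) - f u : ℤ) : R) := by push_cast; rfl
    obtain h | h | h : (f v : ℤ) - f u = -1 ∨ (f v : ℤ) - f u = 0 ∨ (f v : ℤ) - f u = 1 := by
      rw [abs_lt] at hlt; omega
    all_goals simp [hcast, h]
  · obtain ⟨hne, w, hw⟩ := SimpleGraph.exists_adj_adj_of_dist_eq_two huv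
    have : f u ≠ f v := fun h => hne (hnbr w u v hw.1.symm hw.2.symm (by rw [h]))
    exact Int.one_le_abs (by omega)

theorem ZMod.natCast_eq_of_eq_emod {n p ℓ : ℕ} {k c : ℤ} (hp : p ∣ n)
    (h : (ℓ : ℤ) = (p * k + c) % n) : (ℓ : ZMod p) = c := by
  have := congrArg (fun x : ℤ => ZMod.castHom hp (ZMod p) (x : ZMod n)) h
  simp only [map_intCast, ZMod.intCast_mod] at this
  push_cast at this
  rwa [ZMod.natCast_self, zero_mul, zero_add] at this

def IsKingVector (a b : ℤ) : Prop :=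
  -1 ≤ a ∧ a ≤ 1 ∧ -1 ≤ b ∧ b ≤ 1 ∧ (a ≠ 0 ∨ b ≠ 0)

theorem IsKingVector.six_mul_add_two_mul_notMem {a b : ℤ} (h : IsKingVector a b) :
    (6 * a + 2 * b : ZMod 11) ∉ ({-1, 0, 1} : Set (ZMod 11)) := by
  obtain ⟨ha₁, ha₂, hb₁, hb₂, hab⟩ := h
  interval_cases a <;> interval_cases b <;> simp at hab ⊢ <;> decide

theorem IsKingVector.eq_of_six_mul_add_two_mul_eq {a b a' b' : ℤ} (h : IsKingVector a b)
    (h' : IsKingVector a' b') (heq : (6 * a + 2 * b : ZMod 11) = 6 * a' + 2 * b') :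
    a = a' ∧ b = b' := by
  obtain ⟨ha₁, ha₂, hb₁, hb₂, -⟩ := h
  obtain ⟨ha₁', ha₂', hb₁', hb₂', -⟩ := h'
  revert heq
  interval_cases a <;> interval_cases b <;> interval_cases a' <;> interval_cases b' <;> decide

section StrongBundle

variable {m n ℓ : ℕ}

def ForwardStep (ℓ : ℕ) (u v : Fin m × ZMod n) (b : ℤ) : Prop :=
  ((u.1 : ℕ) + 1 = v.1 ∧ v.2 = u.2 + b) ∨
  ((u.1 : ℕ) = m - 1 ∧ (v.1 : ℕ) = 0 ∧ v.2 = u.2 + ℓ + b)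

/-- `v = u + (a, b)` in the king's graph on `ℤ × ℤ` covering the bundle: `a` is the step
along the base, `b` the step along the fiber. -/
def KingMove (ℓ : ℕ) (u v : Fin m × ZMod n) (a b : ℤ) : Prop :=
  (a = 0 ∧ u.1 = v.1 ∧ v.2 = u.2 + b) ∨ (a = 1 ∧ ForwardStep ℓ u v b) ∨
  (a = -1 ∧ ForwardStep ℓ v u (-b))

theorem bundleStep_cases {u v : Fin m × ZMod n} (h : bundleStep m n ℓ u v) :
    (u.1 = v.1 ∧ ∃ b : ℤ, (b = 1 ∨ b = -1) ∧ v.2 = u.2 + b) ∨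
    ∃ b : ℤ, -1 ≤ b ∧ b ≤ 1 ∧ ForwardStep ℓ u v b := by
  rcases h with ⟨h1, h2 | h2⟩ | ⟨h1, h2 | h2 | h2⟩ | ⟨h1, h1', h2 | h2 | h2⟩
  · exact .inl ⟨h1, 1, by norm_num, by simp [h2]⟩
  · exact .inl ⟨h1, -1, by norm_num, by simp [h2, sub_eq_add_neg]⟩
  · exact .inr ⟨-1, by norm_num, by norm_num, .inl ⟨h1, by simp [h2, sub_eq_add_neg]⟩⟩
  · exact .inr ⟨0, by norm_num, by norm_num, .inl ⟨h1, by simp [h2]⟩⟩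
  · exact .inr ⟨1, by norm_num, by norm_num, .inl ⟨h1, by simp [h2]⟩⟩
  · exact .inr ⟨-1, by norm_num, by norm_num, .inr ⟨h1, h1', by simp [h2, sub_eq_add_neg]⟩⟩
  · exact .inr ⟨0, by norm_num, by norm_num, .inr ⟨h1, h1', by simp [h2]⟩⟩
  · exact .inr ⟨1, by norm_num, by norm_num, .inr ⟨h1, h1', by simp [h2]⟩⟩

theorem exists_kingMove_of_adj {u v : Fin m × ZMod n} (h : (strongBundle m n ℓ).Adj u v) :
    ∃ a b : ℤ, IsKingVector a b ∧ KingMove ℓ u v a b := by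
  rcases h.2 with h | h <;> rcases bundleStep_cases h with ⟨h1, b, hb, h2⟩ | ⟨b, hb1, hb2, hf⟩
  · exact ⟨0, b, by unfold IsKingVector; omega, .inl ⟨rfl, h1, h2⟩⟩
  · exact ⟨1, b, by unfold IsKingVector; omega, .inr (.inl ⟨rfl, hf⟩)⟩
  · exact ⟨0, -b, by unfold IsKingVector; omega, .inl ⟨rfl, h1.symm, by simp [h2]⟩⟩
  · exact ⟨-1, -b, by unfold IsKingVector; omega, .inr (.inr ⟨rfl, by rwa [neg_neg]⟩)⟩

theorem ForwardStep.right_unique {u v v' : Fin m × ZMod n} {b : ℤ}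
    (h : ForwardStep ℓ u v b) (h' : ForwardStep ℓ u v' b) : v = v' := by
  have := v.1.isLt; have := v'.1.isLt
  rcases h with ⟨h₁, h₂⟩ | ⟨h₁, h₀, h₂⟩ <;> rcases h' with ⟨h₁', h₂'⟩ | ⟨h₁', h₀', h₂'⟩
  · exact Prod.ext (Fin.ext (by omega)) (h₂.trans h₂'.symm)
  · omega
  · omega
  · exact Prod.ext (Fin.ext (by omega)) (h₂.trans h₂'.symm)

theorem ForwardStep.left_unique {u u' v : Fin m × ZMod n} {b : ℤ}
    (h : ForwardStep ℓ u v b) (h' : ForwardStep ℓ u' v b) : u = u' := by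
  rcases h with ⟨h₁, h₂⟩ | ⟨h₁, h₀, h₂⟩ <;> rcases h' with ⟨h₁', h₂'⟩ | ⟨h₁', h₀', h₂'⟩
  · exact Prod.ext (Fin.ext (by omega)) (add_right_cancel (h₂.symm.trans h₂'))
  · omega
  · omega
  · exact Prod.ext (Fin.ext (by omega)) (add_right_cancel (add_right_cancel (h₂.symm.trans h₂')))

theorem KingMove.unique {w u v : Fin m × ZMod n} {a b : ℤ}
    (hu : KingMove ℓ w u a b) (hv : KingMove ℓ w v a b) : u = v := by
  rcases hu with ⟨rfl, hu1, hu2⟩ | ⟨rfl, hu⟩ | ⟨rfl, hu⟩ <;>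
    rcases hv with ⟨ha, hv1, hv2⟩ | ⟨ha, hv⟩ | ⟨ha, hv⟩ <;> try omega
  · exact Prod.ext (hu1.symm.trans hv1) (hu2.trans hv2.symm)
  · exact hu.right_unique hv
  · exact hu.left_unique hv

def g2 (v : Fin m × ZMod n) : ℕ := (6 * (v.1 : ℕ) + 2 * v.2.val) % 11

theorem cast_g2 [NeZero n] (hn : 11 ∣ n) (v : Fin m × ZMod n) :
    (g2 v : ZMod 11) = 6 * ((v.1 : ℕ) : ZMod 11) + 2 * ZMod.castHom hn (ZMod 11) v.2 := by
  simp [g2, ZMod.castHom_apply, ZMod.natCast_val]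

theorem ForwardStep.cast_g2_eq [NeZero n] (hn : 11 ∣ n) (hℓ : (ℓ : ZMod 11) = 3 * m)
    {u v : Fin m × ZMod n} {b : ℤ} (h : ForwardStep ℓ u v b) :
    (g2 v : ZMod 11) = g2 u + 6 + 2 * b := by
  rcases h with ⟨h1, h2⟩ | ⟨h1, h1', h2⟩
  · rw [cast_g2 hn, cast_g2 hn, h2, ← h1, map_add, map_intCast]; push_cast; ring
  · have := u.1.isLt
    rw [cast_g2 hn, cast_g2 hn, h2, h1, h1', Nat.cast_sub (by omega), map_add, map_add,
      map_intCast, map_natCast, hℓ]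
    push_cast; ring

theorem KingMove.cast_g2_eq [NeZero n] (hn : 11 ∣ n) (hℓ : (ℓ : ZMod 11) = 3 * m)
    {u v : Fin m × ZMod n} {a b : ℤ} (h : KingMove ℓ u v a b) :
    (g2 v : ZMod 11) = g2 u + (6 * a + 2 * b) := by
  rcases h with ⟨rfl, h1, h2⟩ | ⟨rfl, h⟩ | ⟨rfl, h⟩
  · rw [cast_g2 hn, cast_g2 hn, h2, ← h1, map_add, map_intCast]; push_cast; ring
  · rw [h.cast_g2_eq hn hℓ]; push_cast; ring
  · rw [h.cast_g2_eq hn hℓ]; push_cast; ring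

end StrongBundle

theorem g2_isL21Labeling_general (m n ℓ : ℕ) (hn : 11 ∣ n) (hn0 : 0 < n)
    (h : ∃ k : ℤ, (ℓ : ℤ) = (11 * k + 3 * m) % n) :
    IsL21Labeling (strongBundle m n ℓ)
      (fun v => (6 * (v.1 : ℕ) + 2 * v.2.val) % 11) ∧
    ∀ v : Fin m × ZMod n, (6 * (v.1 : ℕ) + 2 * v.2.val) % 11 ≤ 10 := by
  have : NeZero n := ⟨hn0.ne'⟩
  obtain ⟨k, hk⟩ := h
  have hℓ : (ℓ : ZMod 11) = 3 * m := by simpa using ZMod.natCast_eq_of_eq_emod hn hk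
  refine ⟨IsL21Labeling.of_cast (R := ZMod 11) _ g2 (fun u v huv => ?_)
    (fun w u v hu hv huv => ?_), fun v => Nat.le_of_lt_succ (Nat.mod_lt _ (by norm_num))⟩
  · obtain ⟨a, b, hab, hmove⟩ := exists_kingMove_of_adj huv
    rw [hmove.cast_g2_eq hn hℓ, add_sub_cancel_left]
    exact hab.six_mul_add_two_mul_notMem
  · obtain ⟨a, b, hab, hu⟩ := exists_kingMove_of_adj hu
    obtain ⟨a', b', hab', hv⟩ := exists_kingMove_of_adj hv
    rw [hu.cast_g2_eq hn hℓ, hv.cast_g2_eq hn hℓ, add_right_inj] at huv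
    obtain ⟨rfl, rfl⟩ := hab.eq_of_six_mul_add_two_mul_eq hab' huv
    exact hu.unique hv

theorem g2_isL21Labeling (m n ℓ : ℕ) (hm : 3 ≤ m) (hn : 11 ∣ n) (hn0 : 0 < n) (hℓ : ℓ < n)
    (h : ∃ k : ℤ, (ℓ : ℤ) = (11 * k + 3 * m) % n) :
    IsL21Labeling (strongBundle m n ℓ)
      (fun v => (6 * (v.1 : ℕ) + 2 * v.2.val) % 11) ∧
    ∀ v : Fin m × ZMod n, (6 * (v.1 : ℕ) + 2 * v.2.val) % 11 ≤ 10 :=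
  g2_isL21Labeling_general m n ℓ hn hn0 h
end

section
/- Let m ≥ 2 and let n be a positive multiple of 11. Then the map f defined on the vertices of the strong product P_m ⊠ C_n by f(i,j) = (2i + 5j) mod 11 is an L(2,1)-labeling of P_m ⊠ C_n whose labels all lie in {0,1,…,10}; consequently λ(P_m ⊠ C_n) ≤ 10. -/
/-- The path graph `P_m` on vertices `0, …, m-1`. -/
def pathG (m : ℕ) : SimpleGraph (Fin m) where
  Adj i j := (i : ℕ) + 1 = (j : ℕ) ∨ (j : ℕ) + 1 = (i : ℕ)
  symm := ⟨fun i j h => h.symm⟩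
  loopless := ⟨by intro i h; rcases h with h | h <;> omega⟩

/-- The cycle graph `C_n` on vertices `0, …, n-1` (as `ZMod n`). -/
def cycleG (n : ℕ) : SimpleGraph (ZMod n) where
  Adj u v := u ≠ v ∧ (v = u + 1 ∨ u = v + 1)
  symm := ⟨fun u v ⟨h1, h2⟩ => ⟨h1.symm, h2.symm⟩⟩
  loopless := ⟨fun u h => h.1 rfl⟩

/-- The strong product `G ⊠ H`. -/
def strongProd {α β : Type*} (G : SimpleGraph α) (H : SimpleGraph β) :
    SimpleGraph (α × β) where
  Adj u v :=
    (u.1 = v.1 ∧ H.Adj u.2 v.2) ∨ (u.2 = v.2 ∧ G.Adj u.1 v.1) ∨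
    (G.Adj u.1 v.1 ∧ H.Adj u.2 v.2)
  symm := ⟨by
    rintro u v (⟨h1, h2⟩ | ⟨h1, h2⟩ | ⟨h1, h2⟩)
    · exact Or.inl ⟨h1.symm, h2.symm⟩
    · exact Or.inr (Or.inl ⟨h1.symm, h2.symm⟩)
    · exact Or.inr (Or.inr ⟨h1.symm, h2.symm⟩)⟩
  loopless := ⟨by
    rintro u (⟨-, h⟩ | ⟨-, h⟩ | ⟨h, -⟩)
    · exact H.irrefl h
    · exact G.irrefl h
    · exact G.irrefl h⟩

/-! Reading labels in `ZMod 11`, the labeling is the affine map `(i, j) ↦ 2i + 5j`, which is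
well defined on `C_n` because `11 ∣ n`. A walk of length `ℓ` moves each coordinate by at most `ℓ`.
Hence neighbours have labels differing by `2d + 5e` with `d, e ∈ {-1, 0, 1}` not both zero, that is
by `±2, ±3, ±5` or `±7`, never by `0` or `±1`; and vertices at distance two have labels differing
by `2d + 5e` with `|d|, |e| ≤ 2`, which vanishes mod `11` only for `d = e = 0`. -/

lemma two_le_abs_val_sub_val {p : ℕ} [NeZero p] {a b : ZMod p}
    (h : ∀ k : ℤ, |k| ≤ 1 → a - b ≠ k) : 2 ≤ |(a.val : ℤ) - b.val| := by
  by_contra! hlt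
  refine h ((a.val : ℤ) - b.val) (by omega) ?_
  push_cast
  simp only [ZMod.natCast_zmod_val]

lemma isL21Labeling_val {V : Type*} {p : ℕ} [NeZero p] (G : SimpleGraph V) (φ : V → ZMod p)
    (hadj : ∀ u v, G.Adj u v → ∀ k : ℤ, |k| ≤ 1 → φ v - φ u ≠ k)
    (hdist : ∀ u v, G.dist u v = 2 → φ u ≠ φ v) :
    IsL21Labeling G fun v => (φ v).val := by
  refine ⟨fun u v huv => ?_, fun u v huv => ?_⟩
  · rw [abs_sub_comm]
    exact two_le_abs_val_sub_val (hadj u v huv)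
  · refine Int.one_le_abs (sub_ne_zero.2 ?_)
    exact_mod_cast (ZMod.val_injective p).ne (hdist u v huv)

lemma lambdaNumber_le_of_isL21Labeling {V : Type*} {G : SimpleGraph V} {f : V → ℕ} {k : ℕ}
    (hf : IsL21Labeling G f) (hk : ∀ v, f v ≤ k) : lambdaNumber G ≤ k :=
  calc lambdaNumber G ≤ spanOf f := Nat.sInf_le ⟨f, hf, rfl⟩
    _ ≤ sSup (Set.range f) := Nat.sub_le _ _
    _ ≤ k := csSup_le' (Set.forall_mem_range.2 hk)

lemma strongProd_adj_imp_eq_or_adj {α β : Type*} {G : SimpleGraph α} {H : SimpleGraph β}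
    {u v : α × β} (h : (strongProd G H).Adj u v) :
    (u.1 = v.1 ∨ G.Adj u.1 v.1) ∧ (u.2 = v.2 ∨ H.Adj u.2 v.2) := by
  rcases h with ⟨h1, h2⟩ | ⟨h1, h2⟩ | ⟨h1, h2⟩ <;> simp_all

lemma abs_sub_le_one_of_eq_or_pathG_adj {m : ℕ} {i j : Fin m} (h : i = j ∨ (pathG m).Adj i j) :
    |(j : ℤ) - i| ≤ 1 := by
  rw [abs_le]
  rcases h with rfl | h | h <;> omega

lemma exists_eq_add_of_eq_or_cycleG_adj {n : ℕ} {a b : ZMod n}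
    (h : a = b ∨ (cycleG n).Adj a b) : ∃ e : ℤ, |e| ≤ 1 ∧ b = a + e := by
  rcases h with rfl | ⟨-, rfl | rfl⟩
  · exact ⟨0, by simp⟩
  · exact ⟨1, by simp⟩
  · exact ⟨-1, by simp⟩

lemma two_mul_add_five_mul_ne {d e k : ℤ} (hd : |d| ≤ 1) (he : |e| ≤ 1) (hde : d ≠ 0 ∨ e ≠ 0)
    (hk : |k| ≤ 1) : ((2 * d + 5 * e : ℤ) : ZMod 11) ≠ k := by
  rw [Ne, ZMod.intCast_eq_intCast_iff, Int.ModEq]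
  obtain ⟨hd₁, hd₂⟩ := abs_le.1 hd
  obtain ⟨he₁, he₂⟩ := abs_le.1 he
  obtain ⟨hk₁, hk₂⟩ := abs_le.1 hk
  interval_cases d <;> interval_cases e <;> omega

lemma eq_zero_of_two_mul_add_five_mul {d e : ℤ} (hd : |d| ≤ 2) (he : |e| ≤ 2)
    (h : ((2 * d + 5 * e : ℤ) : ZMod 11) = 0) : d = 0 ∧ e = 0 := by
  rw [ZMod.intCast_zmod_eq_zero_iff_dvd] at h
  obtain ⟨hd₁, hd₂⟩ := abs_le.1 hd
  obtain ⟨he₁, he₂⟩ := abs_le.1 he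
  interval_cases d <;> interval_cases e <;> omega

section PathProdCycle

variable {m n : ℕ}

lemma exists_offset_of_walk {u v : Fin m × ZMod n}
    (p : (strongProd (pathG m) (cycleG n)).Walk u v) :
    |(v.1 : ℤ) - u.1| ≤ p.length ∧ ∃ E : ℤ, |E| ≤ p.length ∧ v.2 = u.2 + E := by
  induction p with
  | nil => exact ⟨by simp, 0, by simp⟩
  | @cons u w v h p ih =>
    obtain ⟨hD, E, hE, hv⟩ := ih
    obtain ⟨h1, h2⟩ := strongProd_adj_imp_eq_or_adj h
    have hd := abs_sub_le_one_of_eq_or_pathG_adj h1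
    obtain ⟨e, he, hw⟩ := exists_eq_add_of_eq_or_cycleG_adj h2
    rw [SimpleGraph.Walk.length_cons, Nat.cast_succ]
    refine ⟨?_, e + E, ?_, by rw [hv, hw, Int.cast_add, add_assoc]⟩
    · linarith [abs_sub_le (v.1 : ℤ) w.1 u.1]
    · linarith [abs_add_le e E]

lemma eq_of_offset_eq_zero {u v : Fin m × ZMod n} {E : ℤ} (hD : (v.1 : ℤ) - u.1 = 0)
    (hv : v.2 = u.2 + E) (hE : E = 0) : u = v :=
  Prod.ext (Fin.ext (by omega)) (by simp [hv, hE])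

def labelZMod (v : Fin m × ZMod n) : ZMod 11 :=
  ((2 * (v.1 : ℕ) + 5 * v.2.val : ℕ) : ZMod 11)

lemma labelZMod_sub_labelZMod [NeZero n] (hn : 11 ∣ n) {u v : Fin m × ZMod n} {E : ℤ}
    (hv : v.2 = u.2 + E) :
    labelZMod v - labelZMod u = ((2 * ((v.1 : ℤ) - u.1) + 5 * E : ℤ) : ZMod 11) := by
  simp only [labelZMod, Nat.cast_add, Nat.cast_mul, ZMod.natCast_val, hv,
    ZMod.cast_add hn, ZMod.cast_intCast hn]
  push_cast
  ring

theorem isL21Labeling_labelZMod [NeZero n] (hn : 11 ∣ n) :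
    IsL21Labeling (strongProd (pathG m) (cycleG n)) fun v => (labelZMod v).val := by
  apply isL21Labeling_val
  · intro u v huv k hk
    obtain ⟨hD, E, hE, hv⟩ := exists_offset_of_walk huv.toWalk
    rw [SimpleGraph.Adj.length_toWalk, Nat.cast_one] at hD hE
    rw [labelZMod_sub_labelZMod hn hv]
    refine two_mul_add_five_mul_ne hD hE ?_ hk
    by_contra! h0
    exact huv.ne (eq_of_offset_eq_zero h0.1 hv h0.2)
  · intro u v huv heq
    obtain ⟨p, hp⟩ := SimpleGraph.exists_walk_of_dist_ne_zero (ne_of_eq_of_ne huv two_ne_zero)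
    obtain ⟨hD, E, hE, hv⟩ := exists_offset_of_walk p
    rw [hp, huv, Nat.cast_two] at hD hE
    obtain ⟨hD0, hE0⟩ := eq_zero_of_two_mul_add_five_mul hD hE
      (by rw [← labelZMod_sub_labelZMod hn hv, heq, sub_self])
    rw [eq_of_offset_eq_zero hD0 hv hE0, SimpleGraph.dist_self] at huv
    omega

end PathProdCycle

theorem f_isL21Labeling_pathProdCycle_general (m n : ℕ) (hn : 11 ∣ n) (hn0 : 0 < n) :
    IsL21Labeling (strongProd (pathG m) (cycleG n))
      (fun v => (2 * (v.1 : ℕ) + 5 * v.2.val) % 11) ∧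
    (∀ v : Fin m × ZMod n, (2 * (v.1 : ℕ) + 5 * v.2.val) % 11 ≤ 10) ∧
    lambdaNumber (strongProd (pathG m) (cycleG n)) ≤ 10 := by
  have : NeZero n := ⟨hn0.ne'⟩
  have hval : (fun v : Fin m × ZMod n => (2 * (v.1 : ℕ) + 5 * v.2.val) % 11) =
      fun v => (labelZMod v).val := funext fun v => (ZMod.val_natCast _ _).symm
  have hL : IsL21Labeling (strongProd (pathG m) (cycleG n))
      (fun v => (2 * (v.1 : ℕ) + 5 * v.2.val) % 11) := hval ▸ isL21Labeling_labelZMod hn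
  have hle : ∀ v : Fin m × ZMod n, (2 * (v.1 : ℕ) + 5 * v.2.val) % 11 ≤ 10 :=
    fun v => Nat.le_of_lt_succ (Nat.mod_lt _ (by norm_num))
  exact ⟨hL, hle, lambdaNumber_le_of_isL21Labeling hL hle⟩

theorem f_isL21Labeling_pathProdCycle (m n : ℕ) (hm : 2 ≤ m) (hn : 11 ∣ n) (hn0 : 0 < n) :
    IsL21Labeling (strongProd (pathG m) (cycleG n))
      (fun v => (2 * (v.1 : ℕ) + 5 * v.2.val) % 11) ∧
    (∀ v : Fin m × ZMod n, (2 * (v.1 : ℕ) + 5 * v.2.val) % 11 ≤ 10) ∧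
    lambdaNumber (strongProd (pathG m) (cycleG n)) ≤ 10 :=
  f_isL21Labeling_pathProdCycle_general m n hn hn0
end
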